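/- arXiv:2509.12010 — 2 statements merged into one kernel-verified Lean document; each statement's English description precedes it below -/
import Mathlib

section
/- For any finite discounted MDP without reward M = (S, A, s0, p, γ), any constants C1, C2 > 0, and any pair of deterministic policies π1, π2, the Lebesgue measure in ℝ^{S×A} of 𝒮R^{OPT}_M ∩ R^{OPT,S}_{M,π1} equals the Lebesgue measure of 𝒮R^{OPT}_M ∩ R^{OPT,S}_{M,π2}; moreover both equal 2^{|S|} · C1^{|S|} · C2^{|S|(|A|−1)}. -/
open scoped ENNReal

open scoped BigOperators
open MeasureTheory

/-- A finite discounted MDP without reward. -/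
structure MDP (S A : Type) [Fintype S] [Fintype A] where
  s0 : S
  p : S → A → S → ℝ
  p_nonneg : ∀ s a s', 0 ≤ p s a s'
  p_sum_one : ∀ s a, ∑ s', p s a s' = 1
  disc : ℝ
  disc_nonneg : 0 ≤ disc
  disc_lt_one : disc < 1

section Defs

variable {S A : Type} [Fintype S] [Fintype A] [DecidableEq S] [DecidableEq A]

/-- `π` is a (stochastic) policy: each `π s` is a probability distribution on actions. -/
def IsPolicy (π : S → A → ℝ) : Prop :=
  (∀ s a, 0 ≤ π s a) ∧ ∀ s, ∑ a, π s a = 1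

open Classical in
/-- The stochastic policy induced by a deterministic policy `d`. -/
noncomputable def detPolicy (d : S → A) : S → A → ℝ :=
  fun s a => if a = d s then 1 else 0

/-- The state-transition matrix of a policy. -/
noncomputable def Pmat (M : MDP S A) (π : S → A → ℝ) : Matrix S S ℝ :=
  Matrix.of fun s s' => ∑ a, π s a * M.p s a s'

/-- The value function `V^π(s; p, r)`. -/
noncomputable def Vpi (M : MDP S A) (π : S → A → ℝ) (r : S × A → ℝ) (s : S) : ℝ :=
  ∑' t : ℕ, M.disc ^ t * ((Pmat M π ^ t).mulVec (fun s' => ∑ a, π s' a * r (s', a))) s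

/-- The optimal value function `V*(s; p, r)`. -/
noncomputable def Vstar (M : MDP S A) (r : S × A → ℝ) (s : S) : ℝ :=
  ⨆ π : {π : S → A → ℝ // IsPolicy π}, Vpi M π.1 r s

noncomputable def Qpi (M : MDP S A) (π : S → A → ℝ) (r : S × A → ℝ) (s : S) (a : A) : ℝ :=
  r (s, a) + M.disc * ∑ s', M.p s a s' * Vpi M π r s'

noncomputable def Api (M : MDP S A) (π : S → A → ℝ) (r : S × A → ℝ) (s : S) (a : A) : ℝ :=
  Qpi M π r s a - Vpi M π r s

noncomputable def Qstar (M : MDP S A) (r : S × A → ℝ) (s : S) (a : A) : ℝ :=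
  r (s, a) + M.disc * ∑ s', M.p s a s' * Vstar M r s'

noncomputable def Astar (M : MDP S A) (r : S × A → ℝ) (s : S) (a : A) : ℝ :=
  Qstar M r s a - Vstar M r s

/-- The soft (entropy-regularized) value function `V^π_λ(s; p, r)`. -/
noncomputable def VpiSoft (M : MDP S A) (lam : ℝ) (π : S → A → ℝ) (r : S × A → ℝ) (s : S) : ℝ :=
  ∑' t : ℕ, M.disc ^ t *
    ((Pmat M π ^ t).mulVec
      (fun s' => ∑ a, π s' a * (r (s', a) - lam * Real.log (π s' a)))) s

noncomputable def VstarSoft (M : MDP S A) (lam : ℝ) (r : S × A → ℝ) (s : S) : ℝ :=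
  ⨆ π : {π : S → A → ℝ // IsPolicy π}, VpiSoft M lam π.1 r s

noncomputable def QstarSoft (M : MDP S A) (lam : ℝ) (r : S × A → ℝ) (s : S) (a : A) : ℝ :=
  r (s, a) + M.disc * ∑ s', M.p s a s' * VstarSoft M lam r s'

noncomputable def AstarSoft (M : MDP S A) (lam : ℝ) (r : S × A → ℝ) (s : S) (a : A) : ℝ :=
  QstarSoft M lam r s a - VstarSoft M lam r s

/-- The OPT feasible set `R^{OPT,S̄}_{M,d}` of a deterministic policy `d`. -/
def ROPT (M : MDP S A) (Sbar : Set S) (d : S → A) : Set (S × A → ℝ) :=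
  {r | ∀ s ∈ Sbar, ∀ a, Qstar M r s a ≤ Qstar M r s (d s)}

/-- The MCE feasible set `R^{MCE,S}_{M,π}` (with `S̄ = S`). -/
def RMCE (M : MDP S A) (lam : ℝ) (π : S → A → ℝ) : Set (S × A → ℝ) :=
  {r | ∀ s a, π s a =
      Real.exp (QstarSoft M lam r s a / lam) / ∑ a', Real.exp (QstarSoft M lam r s a' / lam)}

/-- The BIRL feasible set `R^{BIRL,S}_{M,π}` (with `S̄ = S`). -/
def RBIRL (M : MDP S A) (bet : ℝ) (π : S → A → ℝ) : Set (S × A → ℝ) :=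
  {r | ∀ s a, π s a =
      Real.exp (Qstar M r s a / bet) / ∑ a', Real.exp (Qstar M r s a' / bet)}

open Classical in
/-- The matrix `W_{p,π}`. -/
noncomputable def Wmat (M : MDP S A) (π : S → A → ℝ) : Matrix S S ℝ :=
  Matrix.of fun s s' => (if s' = s then (1 : ℝ) else 0) - M.disc * ∑ a, π s a * M.p s a s'

/-- `k_π := |det W_{p,π}|^{-1/|S|}`. -/
noncomputable def kpi (M : MDP S A) (π : S → A → ℝ) : ℝ :=
  |(Wmat M π).det| ^ (-(1 : ℝ) / (Fintype.card S : ℝ))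

/-- `𝒮R^{OPT}_M`. -/
def SROPT (M : MDP S A) (C1 C2 : ℝ) : Set (S × A → ℝ) :=
  {r | ∀ π : S → A → ℝ, IsPolicy π → (∀ s, Vpi M π r s = Vstar M r s) →
      ∀ s a, |Vpi M π r s| ≤ C1 * kpi M π ∧ |Api M π r s a| ≤ C2}

/-- `𝒮R^{MCE}_M`. -/
def SRMCE (M : MDP S A) (lam C1 C2 : ℝ) : Set (S × A → ℝ) :=
  {r | ∀ s a, |VstarSoft M lam r s| ≤ C1 ∧ |AstarSoft M lam r s a| ≤ C2}

/-- `𝒮R^{BIRL}_M`. -/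
def SRBIRL (M : MDP S A) (C1 C2 : ℝ) : Set (S × A → ℝ) :=
  {r | ∀ s a, |Vstar M r s| ≤ C1 ∧ |Astar M r s a| ≤ C2}

/-- Discounted state occupancy `∑_{t≥0} γ^t P_{M,π}(s_t = s)`. -/
noncomputable def occ (M : MDP S A) (π : S → A → ℝ) (s : S) : ℝ :=
  ∑' t : ℕ, M.disc ^ t * (Pmat M π ^ t) M.s0 s

/-- The support `S_{M,π}` of a policy: states reachable with positive probability. -/
def supp (M : MDP S A) (π : S → A → ℝ) : Set S := {s | 0 < occ M π s}

end Defs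

/-- The unit hypercube `[-1,1]^{S×A}`. -/
def cube (S A : Type) [Fintype S] [Fintype A] : Set (S × A → ℝ) :=
  {r | ∀ sa, |r sa| ≤ 1}

section Aux
set_option linter.unusedSectionVars false

variable {S A : Type} [Fintype S] [Fintype A] [DecidableEq S] [DecidableEq A]

/-- Row-stochastic matrices. -/
def RowStoch (P : Matrix S S ℝ) : Prop :=
  (∀ s s', 0 ≤ P s s') ∧ ∀ s, ∑ s', P s s' = 1

lemma isPolicy_detPolicy (d : S → A) : IsPolicy (detPolicy d) := by
  constructor
  · intro s a; unfold detPolicy; split <;> norm_num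
  · intro s; simp [detPolicy]

lemma detPolicy_sum (d : S → A) (s : S) (x : A → ℝ) :
    ∑ a, detPolicy d s a * x a = x (d s) := by
  simp [detPolicy, ite_mul, Finset.sum_ite_eq']

lemma pmat_apply (M : MDP S A) (π : S → A → ℝ) (v : S → ℝ) (s : S) :
    (Pmat M π).mulVec v s = ∑ s', (∑ a, π s a * M.p s a s') * v s' := rfl

lemma pmat_det_apply (M : MDP S A) (d : S → A) (s s' : S) :
    Pmat M (detPolicy d) s s' = M.p s (d s) s' := by
  simp [Pmat, detPolicy, ite_mul, Finset.sum_ite_eq']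

lemma pmat_det_mulVec (M : MDP S A) (d : S → A) (v : S → ℝ) (s : S) :
    (Pmat M (detPolicy d)).mulVec v s = ∑ s', M.p s (d s) s' * v s' := by
  rw [pmat_apply]
  refine Finset.sum_congr rfl fun s' _ => ?_
  rw [show ∑ a, detPolicy d s a * M.p s a s' = M.p s (d s) s' from
    detPolicy_sum d s fun a => M.p s a s']

lemma pmat_mulVec_swap (M : MDP S A) (π : S → A → ℝ) (v : S → ℝ) (s : S) :
    (Pmat M π).mulVec v s = ∑ a, π s a * ∑ s', M.p s a s' * v s' := by
  rw [pmat_apply]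
  simp_rw [Finset.sum_mul, Finset.mul_sum, mul_assoc]
  exact Finset.sum_comm

lemma rowStoch_pmat (M : MDP S A) {π : S → A → ℝ} (hπ : IsPolicy π) :
    RowStoch (Pmat M π) := by
  constructor
  · intro s s'
    exact Finset.sum_nonneg fun a _ => mul_nonneg (hπ.1 s a) (M.p_nonneg s a s')
  · intro s
    rw [show ∑ s', Pmat M π s s' = ∑ s', ∑ a, π s a * M.p s a s' from rfl, Finset.sum_comm]
    simp_rw [← Finset.mul_sum, M.p_sum_one]
    simpa using hπ.2 s

lemma RowStoch.pow {P : Matrix S S ℝ} (h : RowStoch P) (t : ℕ) : RowStoch (P ^ t) := by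
  induction t with
  | zero =>
    rw [pow_zero]
    constructor
    · intro s s'; rw [Matrix.one_apply]; split <;> norm_num
    · intro s; simp [Matrix.one_apply]
  | succ t ih =>
    rw [pow_succ]
    constructor
    · intro s s'; rw [Matrix.mul_apply]
      exact Finset.sum_nonneg fun k _ => mul_nonneg (ih.1 s k) (h.1 k s')
    · intro s
      simp_rw [Matrix.mul_apply]
      rw [Finset.sum_comm]
      simp_rw [← Finset.mul_sum, h.2]
      simpa using ih.2 s

lemma RowStoch.abs_mulVec_le {P : Matrix S S ℝ} (h : RowStoch P) {v : S → ℝ} {B : ℝ}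
    (hv : ∀ s, |v s| ≤ B) (s : S) : |P.mulVec v s| ≤ B := by
  have hP : P.mulVec v s = ∑ s', P s s' * v s' := rfl
  rw [hP]
  calc |∑ s', P s s' * v s'| ≤ ∑ s', |P s s' * v s'| := Finset.abs_sum_le_sum_abs _ _
    _ ≤ ∑ s', P s s' * B := by
        refine Finset.sum_le_sum fun s' _ => ?_
        rw [abs_mul, abs_of_nonneg (h.1 s s')]
        exact mul_le_mul_of_nonneg_left (hv s') (h.1 s s')
    _ = B := by rw [← Finset.sum_mul, h.2 s, one_mul]

lemma RowStoch.contraction [Nonempty S] {P : Matrix S S ℝ} (h : RowStoch P) {γ : ℝ}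
    (h0 : 0 ≤ γ) (h1 : γ < 1) {u : S → ℝ}
    (hu : ∀ s, u s ≤ γ * P.mulVec u s) (s : S) : u s ≤ 0 := by
  obtain ⟨s0, -, hs0⟩ := Finset.exists_max_image Finset.univ u ⟨s, Finset.mem_univ s⟩
  have hmax : ∀ s', u s' ≤ u s0 := fun s' => hs0 s' (Finset.mem_univ s')
  have hP : P.mulVec u s0 ≤ u s0 := by
    have e : P.mulVec u s0 = ∑ s', P s0 s' * u s' := rfl
    rw [e]
    calc ∑ s', P s0 s' * u s' ≤ ∑ s', P s0 s' * u s0 :=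
          Finset.sum_le_sum fun s' _ => mul_le_mul_of_nonneg_left (hmax s') (h.1 s0 s')
      _ = u s0 := by rw [← Finset.sum_mul, h.2 s0, one_mul]
  have h2 : u s0 ≤ γ * u s0 := (hu s0).trans (mul_le_mul_of_nonneg_left hP h0)
  nlinarith [hmax s]

lemma summable_series [Nonempty S] (M : MDP S A) {P : Matrix S S ℝ} (hP : RowStoch P)
    (w : S → ℝ) (s : S) :
    Summable fun t : ℕ => M.disc ^ t * (P ^ t).mulVec w s := by
  obtain ⟨B, hB⟩ : ∃ B, ∀ s', |w s'| ≤ B :=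
    ⟨Finset.univ.sup' Finset.univ_nonempty fun s' => |w s'|,
      fun s' => Finset.le_sup' (fun s'' => |w s''|) (Finset.mem_univ s')⟩
  refine Summable.of_norm_bounded
    (Summable.mul_left B (summable_geometric_of_lt_one M.disc_nonneg M.disc_lt_one)) ?_
  intro t
  rw [Real.norm_eq_abs, abs_mul, abs_pow, abs_of_nonneg M.disc_nonneg]
  calc M.disc ^ t * |(P ^ t).mulVec w s| ≤ M.disc ^ t * B :=
        mul_le_mul_of_nonneg_left ((hP.pow t).abs_mulVec_le hB s) (pow_nonneg M.disc_nonneg t)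
    _ = B * M.disc ^ t := mul_comm _ _

lemma summable_vpi [Nonempty S] (M : MDP S A) {π : S → A → ℝ} (hπ : IsPolicy π)
    (r : S × A → ℝ) (s : S) :
    Summable fun t : ℕ =>
      M.disc ^ t * ((Pmat M π ^ t).mulVec (fun s' => ∑ a, π s' a * r (s', a))) s :=
  summable_series M (rowStoch_pmat M hπ) _ s

lemma vpi_bellman [Nonempty S] (M : MDP S A) {π : S → A → ℝ} (hπ : IsPolicy π)
    (r : S × A → ℝ) (s : S) :
    Vpi M π r s = (∑ a, π s a * r (s, a)) +
      M.disc * (Pmat M π).mulVec (Vpi M π r) s := by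
  classical
  set P := Pmat M π with hPdef
  set w : S → ℝ := fun s' => ∑ a, π s' a * r (s', a) with hw
  have hP := rowStoch_pmat M hπ
  have hsum : ∀ s', Summable fun t : ℕ => M.disc ^ t * (P ^ t).mulVec w s' :=
    fun s' => summable_series M hP w s'
  have h0 : Vpi M π r s = w s + ∑' t : ℕ, M.disc ^ (t + 1) * (P ^ (t + 1)).mulVec w s := by
    rw [Vpi, Summable.tsum_eq_zero_add (hsum s)]
    simp [Matrix.one_mulVec]
  rw [h0]
  congr 1
  have hterm : ∀ t : ℕ, M.disc ^ (t + 1) * (P ^ (t + 1)).mulVec w s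
      = ∑ s', M.disc * (P s s' * (M.disc ^ t * (P ^ t).mulVec w s')) := by
    intro t
    rw [pow_succ' P t, ← Matrix.mulVec_mulVec]
    have e : P.mulVec ((P ^ t).mulVec w) s = ∑ s', P s s' * (P ^ t).mulVec w s' := rfl
    rw [e, Finset.mul_sum]
    refine Finset.sum_congr rfl fun s' _ => by ring
  calc ∑' t : ℕ, M.disc ^ (t + 1) * (P ^ (t + 1)).mulVec w s
      = ∑' t : ℕ, ∑ s', M.disc * (P s s' * (M.disc ^ t * (P ^ t).mulVec w s')) :=
        tsum_congr hterm
    _ = ∑ s', ∑' t : ℕ, M.disc * (P s s' * (M.disc ^ t * (P ^ t).mulVec w s')) :=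
        Summable.tsum_finsetSum fun s' _ => (((hsum s').mul_left (P s s')).mul_left M.disc)
    _ = M.disc * P.mulVec (Vpi M π r) s := by
        have e : P.mulVec (Vpi M π r) s = ∑ s', P s s' * Vpi M π r s' := rfl
        rw [e, Finset.mul_sum]
        refine Finset.sum_congr rfl fun s' _ => ?_
        rw [tsum_mul_left, tsum_mul_left]
        rfl

lemma bellman_unique [Nonempty S] (M : MDP S A) {P : Matrix S S ℝ} (hP : RowStoch P)
    {w V V' : S → ℝ}
    (hV : ∀ s, V s = w s + M.disc * P.mulVec V s)
    (hV' : ∀ s, V' s = w s + M.disc * P.mulVec V' s) : V = V' := by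
  have hsub : ∀ s, (V - V') s = M.disc * P.mulVec (V - V') s := by
    intro s
    rw [Matrix.mulVec_sub]
    have := hV s; have := hV' s
    simp only [Pi.sub_apply]
    linarith [hV s, hV' s]
  have h1 : ∀ s, (V - V') s ≤ 0 :=
    fun s => hP.contraction M.disc_nonneg M.disc_lt_one (fun s' => (hsub s').le) s
  have h2 : ∀ s, (-(V - V')) s ≤ 0 := by
    refine fun s => hP.contraction M.disc_nonneg M.disc_lt_one (fun s' => ?_) s
    rw [Matrix.mulVec_neg]
    simp only [Pi.neg_apply]
    linarith [hsub s']
  funext s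
  have := h1 s; have := h2 s
  simp only [Pi.sub_apply, Pi.neg_apply] at *
  linarith

lemma vpi_eq_of_bellman [Nonempty S] (M : MDP S A) {π : S → A → ℝ} (hπ : IsPolicy π)
    (r : S × A → ℝ) {V : S → ℝ}
    (hV : ∀ s, V s = (∑ a, π s a * r (s, a)) + M.disc * (Pmat M π).mulVec V s) :
    V = Vpi M π r :=
  bellman_unique M (rowStoch_pmat M hπ) hV (vpi_bellman M hπ r)


lemma abs_vpi_le [Nonempty S] [Nonempty A] (M : MDP S A) {π : S → A → ℝ} (hπ : IsPolicy π)
    (r : S × A → ℝ) (s : S) :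
    |Vpi M π r s| ≤
      (Finset.univ.sup' Finset.univ_nonempty fun sa : S × A => |r sa|) * (1 - M.disc)⁻¹ := by
  classical
  set Rb : ℝ := Finset.univ.sup' Finset.univ_nonempty fun sa : S × A => |r sa| with hRb
  have hRb0 : 0 ≤ Rb :=
    le_trans (abs_nonneg _)
      (Finset.le_sup' (fun sa : S × A => |r sa|) (Finset.mem_univ (Classical.arbitrary _)))
  set P := Pmat M π
  set w : S → ℝ := fun s' => ∑ a, π s' a * r (s', a) with hw
  have hwB : ∀ s', |w s'| ≤ Rb := by
    intro s'
    calc |∑ a, π s' a * r (s', a)| ≤ ∑ a, |π s' a * r (s', a)| := Finset.abs_sum_le_sum_abs _ _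
      _ ≤ ∑ a, π s' a * Rb := by
          refine Finset.sum_le_sum fun a _ => ?_
          rw [abs_mul, abs_of_nonneg (hπ.1 s' a)]
          exact mul_le_mul_of_nonneg_left
            (Finset.le_sup' (fun sa : S × A => |r sa|) (Finset.mem_univ (s', a)))
            (hπ.1 s' a)
      _ = Rb := by rw [← Finset.sum_mul, hπ.2 s', one_mul]
  have hnorm : ∀ t : ℕ, |M.disc ^ t * (P ^ t).mulVec w s| ≤ Rb * M.disc ^ t := by
    intro t
    rw [abs_mul, abs_pow, abs_of_nonneg M.disc_nonneg]
    calc M.disc ^ t * |(P ^ t).mulVec w s| ≤ M.disc ^ t * Rb :=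
          mul_le_mul_of_nonneg_left
            (((rowStoch_pmat M hπ).pow t).abs_mulVec_le hwB s)
            (pow_nonneg M.disc_nonneg t)
      _ = Rb * M.disc ^ t := mul_comm _ _
  have hs1 : Summable fun t : ℕ => M.disc ^ t * (P ^ t).mulVec w s :=
    summable_series M (rowStoch_pmat M hπ) w s
  have hs2 : Summable fun t : ℕ => Rb * M.disc ^ t :=
    Summable.mul_left Rb (summable_geometric_of_lt_one M.disc_nonneg M.disc_lt_one)
  have hs3 : Summable fun t : ℕ => |M.disc ^ t * (P ^ t).mulVec w s| :=
    Summable.of_nonneg_of_le (fun t => abs_nonneg _) hnorm hs2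
  calc |Vpi M π r s| ≤ ∑' t : ℕ, |M.disc ^ t * (P ^ t).mulVec w s| := by
        rw [Vpi]
        have h := norm_tsum_le_tsum_norm (f := fun t : ℕ => M.disc ^ t * (P ^ t).mulVec w s)
          (by simp only [Real.norm_eq_abs]; exact hs3)
        simp only [Real.norm_eq_abs] at h
        exact h
    _ ≤ ∑' t : ℕ, Rb * M.disc ^ t := Summable.tsum_le_tsum hnorm hs3 hs2
    _ = Rb * (1 - M.disc)⁻¹ := by
        rw [tsum_mul_left, tsum_geometric_of_lt_one M.disc_nonneg M.disc_lt_one]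

lemma bddAbove_vpi [Nonempty S] [Nonempty A] (M : MDP S A) (r : S × A → ℝ) (s : S) :
    BddAbove (Set.range fun π : {π : S → A → ℝ // IsPolicy π} => Vpi M π.1 r s) := by
  refine ⟨(Finset.univ.sup' Finset.univ_nonempty fun sa : S × A => |r sa|) * (1 - M.disc)⁻¹, ?_⟩
  rintro x ⟨π, rfl⟩
  exact le_trans (le_abs_self _) (abs_vpi_le M π.2 r s)

lemma nonempty_policy [Nonempty A] : Nonempty {π : S → A → ℝ // IsPolicy π} :=
  ⟨⟨detPolicy fun _ => Classical.arbitrary A, isPolicy_detPolicy _⟩⟩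

lemma vpi_le_vstar [Nonempty S] [Nonempty A] (M : MDP S A) {π : S → A → ℝ}
    (hπ : IsPolicy π) (r : S × A → ℝ) (s : S) : Vpi M π r s ≤ Vstar M r s :=
  le_ciSup (bddAbove_vpi M r s) (⟨π, hπ⟩ : {π : S → A → ℝ // IsPolicy π})

lemma vstar_le [Nonempty S] [Nonempty A] (M : MDP S A) (r : S × A → ℝ) (s : S) {c : ℝ}
    (h : ∀ π : S → A → ℝ, IsPolicy π → Vpi M π r s ≤ c) : Vstar M r s ≤ c := by
  haveI := nonempty_policy (S := S) (A := A)
  exact ciSup_le fun π => h π.1 π.2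

lemma vpi_eq_sum_qpi [Nonempty S] (M : MDP S A) {π : S → A → ℝ} (hπ : IsPolicy π)
    (r : S × A → ℝ) (s : S) :
    Vpi M π r s = ∑ a, π s a * Qpi M π r s a := by
  rw [vpi_bellman M hπ r s]
  unfold Qpi
  simp_rw [mul_add, Finset.sum_add_distrib]
  congr 1
  rw [pmat_mulVec_swap, Finset.mul_sum]
  refine Finset.sum_congr rfl fun a _ => by ring

lemma qpi_le_qstar [Nonempty S] [Nonempty A] (M : MDP S A) {π : S → A → ℝ}
    (hπ : IsPolicy π) (r : S × A → ℝ) (s : S) (a : A) :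
    Qpi M π r s a ≤ Qstar M r s a := by
  unfold Qpi Qstar
  have h : ∑ s', M.p s a s' * Vpi M π r s' ≤ ∑ s', M.p s a s' * Vstar M r s' :=
    Finset.sum_le_sum fun s' _ =>
      mul_le_mul_of_nonneg_left (vpi_le_vstar M hπ r s') (M.p_nonneg s a s')
  nlinarith [M.disc_nonneg]

lemma vpi_det_eq_qpi [Nonempty S] (M : MDP S A) (d : S → A) (r : S × A → ℝ) (s : S) :
    Vpi M (detPolicy d) r s = Qpi M (detPolicy d) r s (d s) := by
  rw [vpi_bellman M (isPolicy_detPolicy d) r s]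
  unfold Qpi
  rw [detPolicy_sum d s fun a => r (s, a), pmat_det_mulVec]

lemma vstar_eq_vpi_det [Nonempty S] [Nonempty A] (M : MDP S A) (d : S → A) (r : S × A → ℝ)
    (hQ : ∀ s a, Qpi M (detPolicy d) r s a ≤ Vpi M (detPolicy d) r s) (s : S) :
    Vstar M r s = Vpi M (detPolicy d) r s := by
  refine le_antisymm ?_ (vpi_le_vstar M (isPolicy_detPolicy d) r s)
  refine vstar_le M r s ?_
  intro π hπ
  set u : S → ℝ := fun s' => Vpi M π r s' - Vpi M (detPolicy d) r s' with hu
  have key : ∀ s', u s' ≤ M.disc * (Pmat M π).mulVec u s' := by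
    intro s'
    have h2 : ∀ a, Qpi M π r s' a = Qpi M (detPolicy d) r s' a
        + M.disc * ∑ s'', M.p s' a s'' * u s'' := by
      intro a
      unfold Qpi
      have e : ∑ s'', M.p s' a s'' * u s''
          = ∑ s'', M.p s' a s'' * Vpi M π r s''
            - ∑ s'', M.p s' a s'' * Vpi M (detPolicy d) r s'' := by
        rw [← Finset.sum_sub_distrib]
        exact Finset.sum_congr rfl fun s'' _ => by rw [hu]; ring
      rw [e]; ring
    have h3 : Vpi M π r s' = ∑ a, π s' a * Qpi M π r s' a := vpi_eq_sum_qpi M hπ r s'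
    have h4 : ∑ a, π s' a * Qpi M (detPolicy d) r s' a ≤ Vpi M (detPolicy d) r s' := by
      calc ∑ a, π s' a * Qpi M (detPolicy d) r s' a
          ≤ ∑ a, π s' a * Vpi M (detPolicy d) r s' :=
            Finset.sum_le_sum fun a _ => mul_le_mul_of_nonneg_left (hQ s' a) (hπ.1 s' a)
        _ = Vpi M (detPolicy d) r s' := by rw [← Finset.sum_mul, hπ.2 s', one_mul]
    have h5 : (Pmat M π).mulVec u s' = ∑ a, π s' a * ∑ s'', M.p s' a s'' * u s'' :=
      pmat_mulVec_swap M π u s'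
    have h6 : u s' = (∑ a, π s' a * Qpi M (detPolicy d) r s' a - Vpi M (detPolicy d) r s')
        + M.disc * (Pmat M π).mulVec u s' := by
      show Vpi M π r s' - Vpi M (detPolicy d) r s' = _
      rw [h3, h5]
      have e1 : ∑ a, π s' a * Qpi M π r s' a
          = ∑ a, (π s' a * Qpi M (detPolicy d) r s' a
              + M.disc * (π s' a * ∑ s'', M.p s' a s'' * u s'')) := by
        refine Finset.sum_congr rfl fun a _ => ?_
        rw [h2 a]; ring
      rw [e1, Finset.sum_add_distrib, ← Finset.mul_sum]
      ring
    rw [h6]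
    have := h4
    linarith
  have hc := (rowStoch_pmat M hπ).contraction M.disc_nonneg M.disc_lt_one key s
  have hc' : Vpi M π r s - Vpi M (detPolicy d) r s ≤ 0 := hc
  linarith

lemma qstar_eq_qpi_det [Nonempty S] [Nonempty A] (M : MDP S A) (d : S → A) (r : S × A → ℝ)
    (heq : ∀ s, Vstar M r s = Vpi M (detPolicy d) r s) (s : S) (a : A) :
    Qstar M r s a = Qpi M (detPolicy d) r s a := by
  unfold Qstar Qpi
  congr 1
  congr 1
  exact Finset.sum_congr rfl fun s' _ => by rw [heq s']

lemma ropt_char [Nonempty S] [Nonempty A] (M : MDP S A) (d : S → A) (r : S × A → ℝ) :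
    r ∈ ROPT M Set.univ d ↔
      ∀ s a, Qpi M (detPolicy d) r s a ≤ Vpi M (detPolicy d) r s := by
  constructor
  · intro h
    have h' : ∀ s a, Qstar M r s a ≤ Qstar M r s (d s) := fun s a => h s (Set.mem_univ s) a
    have hle : ∀ s, Vstar M r s ≤ Qstar M r s (d s) := by
      intro s
      refine vstar_le M r s ?_
      intro π hπ
      rw [vpi_eq_sum_qpi M hπ r s]
      calc ∑ a, π s a * Qpi M π r s a ≤ ∑ a, π s a * Qstar M r s a :=
            Finset.sum_le_sum fun a _ =>
              mul_le_mul_of_nonneg_left (qpi_le_qstar M hπ r s a) (hπ.1 s a)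
        _ ≤ ∑ a, π s a * Qstar M r s (d s) :=
            Finset.sum_le_sum fun a _ => mul_le_mul_of_nonneg_left (h' s a) (hπ.1 s a)
        _ = Qstar M r s (d s) := by rw [← Finset.sum_mul, hπ.2 s, one_mul]
    set u : S → ℝ := fun s => Vstar M r s - Vpi M (detPolicy d) r s with hu
    have key : ∀ s, u s ≤ M.disc * (Pmat M (detPolicy d)).mulVec u s := by
      intro s
      have e1 : Vpi M (detPolicy d) r s = Qpi M (detPolicy d) r s (d s) :=
        vpi_det_eq_qpi M d r s
      have e2 : Qstar M r s (d s) - Qpi M (detPolicy d) r s (d s)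
          = M.disc * ∑ s', M.p s (d s) s' * u s' := by
        unfold Qstar Qpi
        have e : ∑ s', M.p s (d s) s' * u s'
            = ∑ s', M.p s (d s) s' * Vstar M r s'
              - ∑ s', M.p s (d s) s' * Vpi M (detPolicy d) r s' := by
          rw [← Finset.sum_sub_distrib]
          exact Finset.sum_congr rfl fun s' _ => by rw [hu]; ring
        rw [e]; ring
      have e3 : (Pmat M (detPolicy d)).mulVec u s = ∑ s', M.p s (d s) s' * u s' :=
        pmat_det_mulVec M d u s
      show Vstar M r s - Vpi M (detPolicy d) r s ≤ _
      rw [e3]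
      linarith [e2, hle s, e1]
    have hub : ∀ s, Vstar M r s ≤ Vpi M (detPolicy d) r s := by
      intro s
      have hc := (rowStoch_pmat M (isPolicy_detPolicy d)).contraction
        M.disc_nonneg M.disc_lt_one key s
      have hc' : Vstar M r s - Vpi M (detPolicy d) r s ≤ 0 := hc
      linarith
    have heq : ∀ s, Vstar M r s = Vpi M (detPolicy d) r s :=
      fun s => le_antisymm (hub s) (vpi_le_vstar M (isPolicy_detPolicy d) r s)
    intro s a
    have hq := qstar_eq_qpi_det M d r heq
    calc Qpi M (detPolicy d) r s a = Qstar M r s a := (hq s a).symm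
      _ ≤ Qstar M r s (d s) := h' s a
      _ = Qpi M (detPolicy d) r s (d s) := hq s (d s)
      _ = Vpi M (detPolicy d) r s := (vpi_det_eq_qpi M d r s).symm
  · intro hQ s _ a
    have heq : ∀ s, Vstar M r s = Vpi M (detPolicy d) r s := vstar_eq_vpi_det M d r hQ
    have hq := qstar_eq_qpi_det M d r heq
    rw [hq s a, hq s (d s)]
    exact (hQ s a).trans (le_of_eq (vpi_det_eq_qpi M d r s))

lemma opt_policy_eq [Nonempty S] [Nonempty A] (M : MDP S A) (d : S → A) (r : S × A → ℝ)
    (hstrict : ∀ s a, a ≠ d s → Qpi M (detPolicy d) r s a < Vpi M (detPolicy d) r s)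
    {π : S → A → ℝ} (hπ : IsPolicy π) (hopt : ∀ s, Vpi M π r s = Vstar M r s) :
    π = detPolicy d := by
  have hQ : ∀ s a, Qpi M (detPolicy d) r s a ≤ Vpi M (detPolicy d) r s := by
    intro s a
    by_cases ha : a = d s
    · rw [ha]; exact le_of_eq (vpi_det_eq_qpi M d r s).symm
    · exact (hstrict s a ha).le
  have heq := vstar_eq_vpi_det M d r hQ
  have hq := qstar_eq_qpi_det M d r heq
  have hzero : ∀ s a, a ≠ d s → π s a = 0 := by
    intro s a ha
    by_contra hne
    have hpos : 0 < π s a := lt_of_le_of_ne (hπ.1 s a) (Ne.symm hne)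
    have hub : ∀ b, Qpi M π r s b ≤ Vstar M r s := by
      intro b
      calc Qpi M π r s b ≤ Qstar M r s b := qpi_le_qstar M hπ r s b
        _ = Qpi M (detPolicy d) r s b := hq s b
        _ ≤ Vpi M (detPolicy d) r s := hQ s b
        _ = Vstar M r s := (heq s).symm
    have hlt1 : Qpi M π r s a < Vstar M r s := by
      calc Qpi M π r s a ≤ Qstar M r s a := qpi_le_qstar M hπ r s a
        _ = Qpi M (detPolicy d) r s a := hq s a
        _ < Vpi M (detPolicy d) r s := hstrict s a ha
        _ = Vstar M r s := (heq s).symm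
    have hlt : Vpi M π r s < Vstar M r s := by
      rw [vpi_eq_sum_qpi M hπ r s]
      calc ∑ b, π s b * Qpi M π r s b < ∑ b, π s b * Vstar M r s := by
            refine Finset.sum_lt_sum
              (fun b _ => mul_le_mul_of_nonneg_left (hub b) (hπ.1 s b))
              ⟨a, Finset.mem_univ a, mul_lt_mul_of_pos_left hlt1 hpos⟩
        _ = Vstar M r s := by rw [← Finset.sum_mul, hπ.2 s, one_mul]
    exact absurd (hopt s) (ne_of_lt hlt)
  funext s a
  unfold detPolicy
  by_cases ha : a = d s
  · rw [if_pos ha, ha]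
    have h1 := hπ.2 s
    rw [← Finset.add_sum_erase Finset.univ (π s) (Finset.mem_univ (d s))] at h1
    have h2 : ∑ b ∈ Finset.univ.erase (d s), π s b = 0 :=
      Finset.sum_eq_zero fun b hb => hzero s b (Finset.mem_erase.1 hb).1
    linarith
  · rw [if_neg ha]; exact hzero s a ha

lemma wmat_det_apply' (M : MDP S A) (d : S → A) (s s' : S) :
    Wmat M (detPolicy d) s s' = (if s' = s then (1 : ℝ) else 0) - M.disc * M.p s (d s) s' := by
  unfold Wmat
  simp only [Matrix.of_apply]
  rw [show ∑ a, detPolicy d s a * M.p s a s' = M.p s (d s) s' from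
    detPolicy_sum d s fun a => M.p s a s']

lemma wmat_mulVec (M : MDP S A) (d : S → A) (v : S → ℝ) (s : S) :
    (Wmat M (detPolicy d)).mulVec v s = v s - M.disc * ∑ s', M.p s (d s) s' * v s' := by
  have e : (Wmat M (detPolicy d)).mulVec v s = ∑ s', Wmat M (detPolicy d) s s' * v s' := rfl
  rw [e]
  simp_rw [wmat_det_apply', sub_mul, ite_mul, one_mul, zero_mul]
  rw [Finset.sum_sub_distrib]
  congr 1
  · simp [Finset.sum_ite_eq]
  · rw [Finset.mul_sum]
    exact Finset.sum_congr rfl fun s' _ => by ring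

lemma det_wmat_ne_zero [Nonempty S] (M : MDP S A) (d : S → A) :
    (Wmat M (detPolicy d)).det ≠ 0 := by
  intro h
  obtain ⟨v, hv0, hv⟩ := Matrix.exists_mulVec_eq_zero_iff.2 h
  have heq : ∀ s, v s = M.disc * (Pmat M (detPolicy d)).mulVec v s := by
    intro s
    have h1 : (Wmat M (detPolicy d)).mulVec v s = 0 := by rw [hv]; rfl
    rw [wmat_mulVec] at h1
    rw [pmat_det_mulVec]
    linarith
  have hle : ∀ s, v s ≤ 0 :=
    fun s => (rowStoch_pmat M (isPolicy_detPolicy d)).contraction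
      M.disc_nonneg M.disc_lt_one (fun s' => (heq s').le) s
  have hge : ∀ s, -v s ≤ 0 := by
    refine fun s => (rowStoch_pmat M (isPolicy_detPolicy d)).contraction
      M.disc_nonneg M.disc_lt_one (u := fun s' => -v s') (fun s' => ?_) s
    have e : (Pmat M (detPolicy d)).mulVec (fun s'' => -v s'') s'
        = -(Pmat M (detPolicy d)).mulVec v s' := by
      have := Matrix.mulVec_neg (v := v) (A := Pmat M (detPolicy d))
      calc (Pmat M (detPolicy d)).mulVec (fun s'' => -v s'') s'
          = (Pmat M (detPolicy d)).mulVec (-v) s' := rfl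
        _ = -(Pmat M (detPolicy d)).mulVec v s' := by rw [this]; rfl
    rw [e]
    show -v s' ≤ M.disc * -(Pmat M (detPolicy d)).mulVec v s'
    linarith [heq s']
  exact hv0 (funext fun s => show v s = 0 from le_antisymm (hle s) (by linarith [hge s]))


noncomputable def Tmap (M : MDP S A) (d : S → A) : ((S × A) → ℝ) →ₗ[ℝ] ((S × A) → ℝ) where
  toFun f := fun sa => (if sa.2 = d sa.1 then 0 else f sa) + f (sa.1, d sa.1)
    - M.disc * ∑ s', M.p sa.1 sa.2 s' * f (s', d s')
  map_add' f g := by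
    funext sa
    by_cases h : sa.2 = d sa.1
    · simp only [Pi.add_apply, if_pos h, mul_add, Finset.sum_add_distrib]; ring
    · simp only [Pi.add_apply, if_neg h, mul_add, Finset.sum_add_distrib]; ring
  map_smul' c f := by
    funext sa
    have e2 : ∑ x, c * M.p sa.1 sa.2 x * f (x, d x)
        = c * ∑ s', M.p sa.1 sa.2 s' * f (s', d s') := by
      rw [Finset.mul_sum]
      exact Finset.sum_congr rfl fun _ _ => by ring
    by_cases h : sa.2 = d sa.1
    · simp only [Pi.smul_apply, smul_eq_mul, RingHom.id_apply, if_pos h]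
      rw [show (∑ s', M.p sa.1 sa.2 s' * (c * f (s', d s')))
          = ∑ x, c * M.p sa.1 sa.2 x * f (x, d x) from
        Finset.sum_congr rfl fun _ _ => by ring, e2]
      ring
    · simp only [Pi.smul_apply, smul_eq_mul, RingHom.id_apply, if_neg h]
      rw [show (∑ s', M.p sa.1 sa.2 s' * (c * f (s', d s')))
          = ∑ x, c * M.p sa.1 sa.2 x * f (x, d x) from
        Finset.sum_congr rfl fun _ _ => by ring, e2]
      ring

lemma Tmap_apply (M : MDP S A) (d : S → A) (f : S × A → ℝ) (sa : S × A) :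
    Tmap M d f sa = (if sa.2 = d sa.1 then 0 else f sa) + f (sa.1, d sa.1)
      - M.disc * ∑ s', M.p sa.1 sa.2 s' * f (s', d s') := rfl

lemma vpi_Tmap [Nonempty S] (M : MDP S A) (d : S → A) (f : S × A → ℝ) :
    Vpi M (detPolicy d) (Tmap M d f) = fun s => f (s, d s) := by
  refine (vpi_eq_of_bellman M (isPolicy_detPolicy d) (Tmap M d f)
    (V := fun s => f (s, d s)) ?_).symm
  intro s
  rw [detPolicy_sum d s fun a => Tmap M d f (s, a), pmat_det_mulVec]
  simp only [Tmap_apply]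
  ring_nf
  simp

lemma qpi_Tmap [Nonempty S] (M : MDP S A) (d : S → A) (f : S × A → ℝ) (s : S) (a : A) :
    Qpi M (detPolicy d) (Tmap M d f) s a
      = (if a = d s then 0 else f (s, a)) + f (s, d s) := by
  unfold Qpi
  simp only [vpi_Tmap, Tmap_apply]
  ring


noncomputable def eSplit (d : S → A) : (S ⊕ {x : S × A // x.2 ≠ d x.1}) ≃ S × A where
  toFun := Sum.elim (fun s => (s, d s)) Subtype.val
  invFun x := if h : x.2 = d x.1 then Sum.inl x.1 else Sum.inr ⟨x, h⟩
  left_inv := by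
    rintro (s | ⟨x, hx⟩)
    · dsimp only [Sum.elim_inl]
      rw [dif_pos rfl]
    · dsimp only [Sum.elim_inr]
      rw [dif_neg hx]
  right_inv := by
    intro x
    dsimp only []
    by_cases h : x.2 = d x.1
    · rw [dif_pos h]
      exact (Prod.ext rfl h.symm : (x.1, d x.1) = x)
    · rw [dif_neg h]
      rfl

noncomputable def Texp (M : MDP S A) (d : S → A) : Matrix (S × A) (S × A) ℝ :=
  Matrix.of fun i j =>
    (if i.2 = d i.1 then 0 else if i = j then (1 : ℝ) else 0)
      + (if (i.1, d i.1) = j then 1 else 0)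
      - M.disc * (if j.2 = d j.1 then M.p i.1 i.2 j.1 else 0)

lemma toMatrix_Tmap (M : MDP S A) (d : S → A) :
    LinearMap.toMatrix (Pi.basisFun ℝ (S × A)) (Pi.basisFun ℝ (S × A)) (Tmap M d)
      = Texp M d := by
  ext i j
  rw [LinearMap.toMatrix_apply, Pi.basisFun_repr, Pi.basisFun_apply]
  rw [Tmap_apply]
  have h1 : (Pi.single (M := fun _ : S × A => ℝ) j 1) i = if i = j then 1 else 0 := by simp [Pi.single_apply]
  have h2 : (Pi.single (M := fun _ : S × A => ℝ) j 1) (i.1, d i.1) = if (i.1, d i.1) = j then 1 else 0 := by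
    simp [Pi.single_apply]
  have h3 : ∑ s', M.p i.1 i.2 s' * (Pi.single (M := fun _ : S × A => ℝ) j 1) (s', d s')
      = if j.2 = d j.1 then M.p i.1 i.2 j.1 else 0 := by
    rw [Finset.sum_eq_single j.1]
    · rw [Pi.single_apply]
      by_cases hj : j.2 = d j.1
      · rw [if_pos (Prod.ext rfl hj.symm : (j.1, d j.1) = j), if_pos hj, mul_one]
      · rw [if_neg (fun hcon : (j.1, d j.1) = j => hj (by rw [← hcon])), if_neg hj, mul_zero]
    · intro s' _ hs'
      rw [Pi.single_apply, if_neg (fun hcon : (s', d s') = j => hs' (congrArg Prod.fst hcon)),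
        mul_zero]
    · intro h; exact absurd (Finset.mem_univ j.1) h
  rw [h1, h2, h3]
  rfl

lemma texp_submatrix (M : MDP S A) (d : S → A) :
    (Texp M d).submatrix (eSplit d) (eSplit d)
      = Matrix.fromBlocks (Wmat M (detPolicy d)) 0
          (Matrix.of fun (x : {x : S × A // x.2 ≠ d x.1}) (s' : S) => Texp M d x.val (s', d s'))
          1 := by
  ext i j
  rcases i with s | x
  · rcases j with s' | y
    · show Texp M d (s, d s) (s', d s') = Wmat M (detPolicy d) s s'
      rw [wmat_det_apply']
      show (if (s, d s).2 = d (s, d s).1 then 0 else if ((s, d s) : S × A) = (s', d s') then (1:ℝ) else 0)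
          + (if (((s, d s) : S × A).1, d ((s, d s) : S × A).1) = ((s', d s') : S × A) then 1 else 0)
          - M.disc * (if ((s', d s') : S × A).2 = d ((s', d s') : S × A).1
              then M.p (s, d s).1 (s, d s).2 ((s', d s') : S × A).1 else 0)
        = (if s' = s then (1:ℝ) else 0) - M.disc * M.p s (d s) s'
      rw [if_pos rfl, if_pos rfl]
      by_cases hss : s = s'
      · subst hss
        rw [if_pos rfl, if_pos rfl]
        ring
      · rw [if_neg (fun hcon : ((s, d s) : S × A) = (s', d s') => hss (congrArg Prod.fst hcon)),
          if_neg (fun hcon : s' = s => hss hcon.symm)]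
        ring
    · show Texp M d (s, d s) y.val = 0
      have hy := y.prop
      show (if (s, d s).2 = d (s, d s).1 then 0 else if ((s, d s) : S × A) = y.val then (1:ℝ) else 0)
          + (if (((s, d s) : S × A).1, d ((s, d s) : S × A).1) = y.val then 1 else 0)
          - M.disc * (if y.val.2 = d y.val.1 then M.p (s, d s).1 (s, d s).2 y.val.1 else 0) = 0
      rw [if_pos rfl, if_neg hy,
        if_neg (fun hcon : ((s, d s) : S × A) = y.val => hy (by rw [← hcon]))]
      ring
  · rcases j with s' | y
    · rfl
    · show Texp M d x.val y.val = (1 : Matrix {x : S × A // x.2 ≠ d x.1} {x : S × A // x.2 ≠ d x.1} ℝ) x y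
      rw [Matrix.one_apply]
      have hx := x.prop
      have hy := y.prop
      show (if x.val.2 = d x.val.1 then 0 else if x.val = y.val then (1:ℝ) else 0)
          + (if (x.val.1, d x.val.1) = y.val then 1 else 0)
          - M.disc * (if y.val.2 = d y.val.1 then M.p x.val.1 x.val.2 y.val.1 else 0)
        = if x = y then 1 else 0
      rw [if_neg hx, if_neg hy,
        if_neg (fun hcon : (x.val.1, d x.val.1) = y.val => hy (by rw [← hcon]))]
      have : (x.val = y.val) ↔ (x = y) := Subtype.ext_iff.symm
      by_cases hxy : x = y
      · rw [if_pos (this.2 hxy), if_pos hxy]; ring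
      · rw [if_neg (fun h => hxy (this.1 h)), if_neg hxy]; ring

lemma det_Tmap [Nonempty S] (M : MDP S A) (d : S → A) :
    LinearMap.det (Tmap M d) = (Wmat M (detPolicy d)).det := by
  rw [← LinearMap.det_toMatrix (Pi.basisFun ℝ (S × A)), toMatrix_Tmap]
  rw [← Matrix.det_submatrix_equiv_self (eSplit d), texp_submatrix]
  rw [Matrix.det_fromBlocks_zero₁₂, Matrix.det_one, mul_one]


lemma prod_ite_card (d : S → A) (X Y : ℝ≥0∞) :
    (∏ sa : S × A, if sa.2 = d sa.1 then X else Y)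
      = X ^ Fintype.card S * Y ^ (Fintype.card S * (Fintype.card A - 1)) := by
  rw [Fintype.prod_prod_type]
  have inner : ∀ s : S, (∏ a : A, if ((s, a) : S × A).2 = d ((s, a) : S × A).1 then X else Y)
      = X * Y ^ (Fintype.card A - 1) := by
    intro s
    have e : ∀ a : A, (if ((s, a) : S × A).2 = d ((s, a) : S × A).1 then X else Y)
        = if a = d s then X else Y := fun a => rfl
    simp_rw [e]
    rw [← Finset.mul_prod_erase Finset.univ _ (Finset.mem_univ (d s)), if_pos rfl]
    congr 1
    rw [Finset.prod_congr rfl fun a ha => if_neg (Finset.mem_erase.1 ha).1, Finset.prod_const,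
      Finset.card_erase_of_mem (Finset.mem_univ _), Finset.card_univ]
  simp_rw [inner]
  rw [Finset.prod_const, Finset.card_univ, mul_pow, ← pow_mul,
    Nat.mul_comm (Fintype.card A - 1) (Fintype.card S)]

lemma main_volume [Nonempty S] [Nonempty A] (M : MDP S A) (C1 C2 : ℝ)
    (hC1 : 0 < C1) (hC2 : 0 < C2) (d : S → A) :
    MeasureTheory.volume (SROPT M C1 C2 ∩ ROPT M Set.univ d) =
      ENNReal.ofReal (2 ^ Fintype.card S * C1 ^ Fintype.card S *
        C2 ^ (Fintype.card S * (Fintype.card A - 1))) := by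
  classical
  set n := Fintype.card S with hn
  set m := Fintype.card A with hm
  set D : ℝ := |(Wmat M (detPolicy d)).det| with hD
  have hDpos : 0 < D := abs_pos.2 (det_wmat_ne_zero M d)
  set k : ℝ := kpi M (detPolicy d) with hk
  have hkpos : 0 < k := Real.rpow_pos_of_pos hDpos _
  set c : ℝ := C1 * k with hc
  have hcpos : 0 < c := mul_pos hC1 hkpos
  set B : Set ((S × A) → ℝ) :=
    Set.univ.pi fun sa => if sa.2 = d sa.1 then Set.Icc (-c) c else Set.Icc (-C2) 0 with hB
  set B' : Set ((S × A) → ℝ) :=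
    Set.univ.pi fun sa => if sa.2 = d sa.1 then Set.Icc (-c) c else Set.Ico (-C2) 0 with hB'
  have sub1 : (Tmap M d) '' B' ⊆ SROPT M C1 C2 ∩ ROPT M Set.univ d := by
    rintro r ⟨f, hf, rfl⟩
    have hfD : ∀ s : S, |f (s, d s)| ≤ c := by
      intro s
      have h' : f (s, d s) ∈ Set.Icc (-c) c := by
        simpa using hf (s, d s) (Set.mem_univ _)
      exact abs_le.2 ⟨h'.1, h'.2⟩
    have hfO : ∀ s a, a ≠ d s → -C2 ≤ f (s, a) ∧ f (s, a) < 0 := by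
      intro s a ha
      have h' : f (s, a) ∈ Set.Ico (-C2) 0 := by
        simpa [ha] using hf (s, a) (Set.mem_univ _)
      exact ⟨h'.1, h'.2⟩
    have hVs : ∀ s, Vpi M (detPolicy d) (Tmap M d f) s = f (s, d s) :=
      fun s => congrFun (vpi_Tmap M d f) s
    have hQ := qpi_Tmap M d f
    have hQle : ∀ s a, Qpi M (detPolicy d) (Tmap M d f) s a
        ≤ Vpi M (detPolicy d) (Tmap M d f) s := by
      intro s a
      rw [hQ s a, hVs s]
      by_cases ha : a = d s
      · rw [if_pos ha]; simp
      · rw [if_neg ha]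
        linarith [(hfO s a ha).2]
    have hstrict : ∀ s a, a ≠ d s →
        Qpi M (detPolicy d) (Tmap M d f) s a < Vpi M (detPolicy d) (Tmap M d f) s := by
      intro s a ha
      rw [hQ s a, hVs s, if_neg ha]
      linarith [(hfO s a ha).2]
    refine ⟨?_, (ropt_char M d _).2 hQle⟩
    intro π hπ hopt
    have hπd : π = detPolicy d := opt_policy_eq M d _ hstrict hπ hopt
    subst hπd
    intro s a
    constructor
    · rw [hVs s]
      calc |f (s, d s)| ≤ c := hfD s
        _ = C1 * kpi M (detPolicy d) := by rw [hc, hk]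
    · unfold Api
      rw [hQ s a, hVs s]
      by_cases ha : a = d s
      · rw [if_pos ha, show ((0:ℝ) + f (s, d s)) - f (s, d s) = 0 by ring, abs_zero]
        exact hC2.le
      · rw [if_neg ha, show (f (s, a) + f (s, d s)) - f (s, d s) = f (s, a) by ring]
        have h1 := (hfO s a ha).1
        have h2 := (hfO s a ha).2
        rw [abs_le]
        exact ⟨h1, by linarith⟩
  have sub2 : SROPT M C1 C2 ∩ ROPT M Set.univ d ⊆ (Tmap M d) '' B := by
    rintro r ⟨h1, h2⟩
    have hQle := (ropt_char M d r).1 h2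
    have heq : ∀ s, Vstar M r s = Vpi M (detPolicy d) r s := vstar_eq_vpi_det M d r hQle
    have hbounds := h1 (detPolicy d) (isPolicy_detPolicy d) (fun s => (heq s).symm)
    set f : (S × A) → ℝ := fun sa =>
      if sa.2 = d sa.1 then Vpi M (detPolicy d) r sa.1
      else Api M (detPolicy d) r sa.1 sa.2 with hfdef
    have hfd : ∀ s', f (s', d s') = Vpi M (detPolicy d) r s' := by
      intro s'; simp [hfdef]
    refine ⟨f, ?_, ?_⟩
    · intro sa _
      show f sa ∈ (if sa.2 = d sa.1 then Set.Icc (-c) c else Set.Icc (-C2) 0)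
      by_cases h : sa.2 = d sa.1
      · rw [if_pos h]
        have hfa : f sa = Vpi M (detPolicy d) r sa.1 := by
          rw [hfdef]; simp only [if_pos h]
        rw [hfa]
        have hb : |Vpi M (detPolicy d) r sa.1| ≤ c := by
          rw [hc, hk]; exact (hbounds sa.1 sa.2).1
        exact Set.mem_Icc.2 (abs_le.1 hb)
      · rw [if_neg h]
        have hfa : f sa = Api M (detPolicy d) r sa.1 sa.2 := by
          rw [hfdef]; simp only [if_neg h]
        rw [hfa]
        refine Set.mem_Icc.2 ⟨?_, ?_⟩
        · linarith [(abs_le.1 (hbounds sa.1 sa.2).2).1]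
        · unfold Api
          linarith [hQle sa.1 sa.2]
    · funext sa
      rw [Tmap_apply]
      have hsum : ∑ s', M.p sa.1 sa.2 s' * f (s', d s')
          = ∑ s', M.p sa.1 sa.2 s' * Vpi M (detPolicy d) r s' :=
        Finset.sum_congr rfl fun s' _ => by rw [hfd s']
      rw [hsum, hfd sa.1]
      have hQdef : Qpi M (detPolicy d) r sa.1 sa.2
          = r sa + M.disc * ∑ s', M.p sa.1 sa.2 s' * Vpi M (detPolicy d) r s' := by
        unfold Qpi
        rw [Prod.mk.eta]
      by_cases h : sa.2 = d sa.1
      · rw [if_pos h]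
        have e1 : Vpi M (detPolicy d) r sa.1 = Qpi M (detPolicy d) r sa.1 sa.2 := by
          rw [vpi_det_eq_qpi M d r sa.1, h]
        rw [e1, hQdef]
        ring
      · rw [if_neg h]
        have hfa : f sa = Api M (detPolicy d) r sa.1 sa.2 := by
          rw [hfdef]; simp only [if_neg h]
        rw [hfa]
        unfold Api
        rw [hQdef]
        ring
  have himg : ∀ E : Set ((S × A) → ℝ),
      MeasureTheory.volume ((Tmap M d) '' E) = ENNReal.ofReal D * MeasureTheory.volume E := by
    intro E
    rw [MeasureTheory.Measure.addHaar_image_linearMap MeasureTheory.volume (Tmap M d) E,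
      det_Tmap, ← hD]
  have hvolB : MeasureTheory.volume B
      = ENNReal.ofReal (2 * c) ^ n * ENNReal.ofReal C2 ^ (n * (m - 1)) := by
    rw [hB, MeasureTheory.volume_pi_pi]
    have e : ∀ sa : S × A,
        MeasureTheory.volume (if sa.2 = d sa.1 then Set.Icc (-c) c else Set.Icc (-C2) 0)
          = if sa.2 = d sa.1 then ENNReal.ofReal (2 * c) else ENNReal.ofReal C2 := by
      intro sa
      by_cases h : sa.2 = d sa.1
      · rw [if_pos h, if_pos h, Real.volume_Icc, show c - -c = 2 * c by ring]
      · rw [if_neg h, if_neg h, Real.volume_Icc, show (0:ℝ) - -C2 = C2 by ring]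
    simp_rw [e]
    exact prod_ite_card d _ _
  have hvolB' : MeasureTheory.volume B'
      = ENNReal.ofReal (2 * c) ^ n * ENNReal.ofReal C2 ^ (n * (m - 1)) := by
    rw [hB', MeasureTheory.volume_pi_pi]
    have e : ∀ sa : S × A,
        MeasureTheory.volume (if sa.2 = d sa.1 then Set.Icc (-c) c else Set.Ico (-C2) 0)
          = if sa.2 = d sa.1 then ENNReal.ofReal (2 * c) else ENNReal.ofReal C2 := by
      intro sa
      by_cases h : sa.2 = d sa.1
      · rw [if_pos h, if_pos h, Real.volume_Icc, show c - -c = 2 * c by ring]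
      · rw [if_neg h, if_neg h, Real.volume_Ico, show (0:ℝ) - -C2 = C2 by ring]
    simp_rw [e]
    exact prod_ite_card d _ _
  have harith : ENNReal.ofReal D *
        (ENNReal.ofReal (2 * c) ^ n * ENNReal.ofReal C2 ^ (n * (m - 1)))
      = ENNReal.ofReal (2 ^ n * C1 ^ n * C2 ^ (n * (m - 1))) := by
    rw [← ENNReal.ofReal_pow (by positivity) n, ← ENNReal.ofReal_pow hC2.le (n * (m - 1)),
      ← ENNReal.ofReal_mul (by positivity), ← ENNReal.ofReal_mul hDpos.le]
    congr 1
    have hnne : (n : ℝ) ≠ 0 := Nat.cast_ne_zero.2 Fintype.card_ne_zero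
    have hkn : k ^ n = D⁻¹ := by
      rw [hk, kpi, ← hD, ← hn, ← Real.rpow_natCast (D ^ (-(1:ℝ) / (n : ℝ))) n,
        ← Real.rpow_mul hDpos.le, show (-(1:ℝ) / (n : ℝ)) * (n : ℝ) = -1 by field_simp,
        Real.rpow_neg_one]
    have e1 : (2 * c) ^ n = 2 ^ n * C1 ^ n * k ^ n := by rw [hc]; ring
    rw [e1, hkn]
    field_simp
  refine le_antisymm ?_ ?_
  · calc MeasureTheory.volume (SROPT M C1 C2 ∩ ROPT M Set.univ d)
        ≤ MeasureTheory.volume ((Tmap M d) '' B) := MeasureTheory.measure_mono sub2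
      _ = ENNReal.ofReal D * MeasureTheory.volume B := himg B
      _ = _ := by rw [hvolB, harith]
  · calc ENNReal.ofReal (2 ^ n * C1 ^ n * C2 ^ (n * (m - 1)))
        = ENNReal.ofReal D * MeasureTheory.volume B' := by rw [hvolB', harith]
      _ = MeasureTheory.volume ((Tmap M d) '' B') := (himg B').symm
      _ ≤ MeasureTheory.volume (SROPT M C1 C2 ∩ ROPT M Set.univ d) :=
          MeasureTheory.measure_mono sub1

end Aux
/-- the Lebesgue volume of `𝒮R^{OPT}_M ∩ R^{OPT,S}_{M,π}` does not depend on the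
deterministic policy `π`, and equals `2^{|S|} C1^{|S|} C2^{|S|(|A|-1)}`. -/
theorem statement3 {S A : Type} [Fintype S] [Fintype A] [DecidableEq S] [DecidableEq A]
    (M : MDP S A) (C1 C2 : ℝ) (hC1 : 0 < C1) (hC2 : 0 < C2) (d1 d2 : S → A) :
    MeasureTheory.volume (SROPT M C1 C2 ∩ ROPT M Set.univ d1) =
      MeasureTheory.volume (SROPT M C1 C2 ∩ ROPT M Set.univ d2) ∧
    MeasureTheory.volume (SROPT M C1 C2 ∩ ROPT M Set.univ d1) =
      ENNReal.ofReal (2 ^ Fintype.card S * C1 ^ Fintype.card S *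
        C2 ^ (Fintype.card S * (Fintype.card A - 1))) := by
  haveI : Nonempty S := ⟨M.s0⟩
  haveI : Nonempty A := ⟨d1 M.s0⟩
  refine ⟨?_, main_volume M C1 C2 hC1 hC2 d1⟩
  rw [main_volume M C1 C2 hC1 hC2 d1, main_volume M C1 C2 hC1 hC2 d2]
end

section
/- Fix λ > 0 and constants C1, C2 > 0. For any finite discounted MDP without reward M = (S, A, s0, p, γ) and any pair of stochastic policies π1, π2 with π1(a|s) ≥ π_min and π2(a|s) ≥ π_min for all (s,a) (for some π_min > 0), if C2 ≥ λ log(1/π_min), then the |S|-dimensional Hausdorff measure in ℝ^{S×A} of 𝒮R^{MCE}_M ∩ R^{MCE,S}_{M,π1} equals that of 𝒮R^{MCE}_M ∩ R^{MCE,S}_{M,π2}. -/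
open scoped ENNReal

open scoped BigOperators
open MeasureTheory

/-!
The soft optimal value `V*_λ(·; r)` is the unique fixed point of the soft Bellman operator
`V ↦ λ log ∑ₐ exp (Q_V(·, a) / λ)`, a `γ`-contraction, because by Gibbs' variational principle
softmax policies maximize every entropy-regularized one-step return. Hence `r ∈ R^{MCE,S}_{M,π}`
exactly when `r(s, a) = V(s) + λ log π(a|s) - γ ∑ₛ' p(s'|s, a) V(s')` with `V = V*_λ(·; r)`, and
then `A*_λ = λ log π`. Since `|λ log π| ≤ λ log (1/π_min) ≤ C2`, the set
`𝒮R^{MCE}_M ∩ R^{MCE,S}_{M,π}` is the image of `{V | |V| ≤ C1}` under this parametrization, and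
replacing `π1` by `π2` translates it by `λ (log π2 - log π1)`, an isometry.
-/

open Filter Topology Function
open Real (log exp)
open scoped Matrix

theorem abs_sum_mul_le_norm {n : Type*} [Fintype n] {w : n → ℝ} (hw0 : ∀ j, 0 ≤ w j)
    (hw1 : ∑ j, w j = 1) (v : n → ℝ) : |∑ j, w j * v j| ≤ ‖v‖ :=
  calc |∑ j, w j * v j| ≤ ∑ j, w j * ‖v‖ := by
        refine (Finset.abs_sum_le_sum_abs _ _).trans (Finset.sum_le_sum fun j _ => ?_)
        rw [abs_mul, abs_of_nonneg (hw0 j), ← Real.norm_eq_abs]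
        exact mul_le_mul_of_nonneg_left (norm_le_pi_norm v j) (hw0 j)
    _ = ‖v‖ := by rw [← Finset.sum_mul, hw1, one_mul]

namespace Matrix

variable {n : Type*} [Fintype n] [DecidableEq n] {P : Matrix n n ℝ} {γ : ℝ}

theorem norm_mulVec_le_of_mem_rowStochastic (hP : P ∈ rowStochastic ℝ n) (v : n → ℝ) :
    ‖P *ᵥ v‖ ≤ ‖v‖ :=
  (pi_norm_le_iff_of_nonneg (norm_nonneg v)).2 fun i =>
    abs_sum_mul_le_norm (hP.1 i) (sum_row_of_mem_rowStochastic hP i) v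

theorem mulVec_mono_of_mem_rowStochastic (hP : P ∈ rowStochastic ℝ n) {v w : n → ℝ}
    (h : v ≤ w) : P *ᵥ v ≤ P *ᵥ w := fun i => by
  have := nonneg_mulVec_of_mem_rowStochastic hP (x := w - v) (fun j => sub_nonneg.2 (h j)) i
  rwa [mulVec_sub, Pi.sub_apply, sub_nonneg] at this

theorem norm_pow_smul_pow_mulVec_le (hγ : 0 ≤ γ) (hP : P ∈ rowStochastic ℝ n) (v : n → ℝ)
    (t : ℕ) : ‖γ ^ t • (P ^ t *ᵥ v)‖ ≤ ‖v‖ * γ ^ t := by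
  rw [norm_smul, Real.norm_of_nonneg (pow_nonneg hγ t), mul_comm]
  exact mul_le_mul_of_nonneg_right (norm_mulVec_le_of_mem_rowStochastic (pow_mem hP t) v)
    (pow_nonneg hγ t)

theorem summable_pow_smul_pow_mulVec (hγ0 : 0 ≤ γ) (hγ1 : γ < 1) (hP : P ∈ rowStochastic ℝ n)
    (v : n → ℝ) : Summable fun t : ℕ => γ ^ t • (P ^ t *ᵥ v) :=
  .of_norm_bounded ((summable_geometric_of_lt_one hγ0 hγ1).mul_left ‖v‖)
    (norm_pow_smul_pow_mulVec_le hγ0 hP v)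

theorem hasSum_pow_smul_pow_mulVec_sub (hγ0 : 0 ≤ γ) (hγ1 : γ < 1)
    (hP : P ∈ rowStochastic ℝ n) (V : n → ℝ) :
    HasSum (fun t : ℕ => γ ^ t • (P ^ t *ᵥ (V - γ • P *ᵥ V))) V := by
  set u : ℕ → n → ℝ := fun t => γ ^ t • (P ^ t *ᵥ V)
  have hterm : ∀ t, γ ^ t • (P ^ t *ᵥ (V - γ • P *ᵥ V)) = u t - u (t + 1) := fun t => by
    simp only [u, mulVec_sub, mulVec_smul, smul_sub, smul_smul, pow_succ, ← mulVec_mulVec]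
  have hu : Tendsto u atTop (𝓝 0) :=
    squeeze_zero_norm (norm_pow_smul_pow_mulVec_le hγ0 hP V)
      (by simpa using (tendsto_pow_atTop_nhds_zero_of_lt_one hγ0 hγ1).const_mul ‖V‖)
  rw [(summable_pow_smul_pow_mulVec hγ0 hγ1 hP _).hasSum_iff_tendsto_nat]
  simp_rw [hterm, Finset.sum_range_sub']
  simpa [u] using (tendsto_const_nhds (x := u 0)).sub hu

theorem tsum_pow_smul_pow_mulVec_le (hγ0 : 0 ≤ γ) (hγ1 : γ < 1) (hP : P ∈ rowStochastic ℝ n)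
    {v V : n → ℝ} (h : v ≤ V - γ • P *ᵥ V) : ∑' t : ℕ, γ ^ t • (P ^ t *ᵥ v) ≤ V :=
  hasSum_le
    (fun t => smul_le_smul_of_nonneg_left (mulVec_mono_of_mem_rowStochastic (pow_mem hP t) h)
      (pow_nonneg hγ0 t))
    (summable_pow_smul_pow_mulVec hγ0 hγ1 hP v).hasSum
    (hasSum_pow_smul_pow_mulVec_sub hγ0 hγ1 hP V)

end Matrix

section LogSumExp

variable {A : Type*} [Fintype A] {lam : ℝ}

noncomputable def logSumExp (lam : ℝ) (x : A → ℝ) : ℝ :=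
  lam * log (∑ a, exp (x a / lam))

noncomputable def softmax (lam : ℝ) (x : A → ℝ) (a : A) : ℝ :=
  exp (x a / lam) / ∑ a', exp (x a' / lam)

theorem logSumExp_const_add_mul_log {w : A → ℝ} (hlam : lam ≠ 0) (hw : ∀ a, 0 < w a)
    (hw1 : ∑ a, w a = 1) (c : ℝ) : logSumExp lam (fun a => c + lam * log (w a)) = c := by
  simp only [logSumExp, add_div, mul_div_cancel_left₀ _ hlam, Real.exp_add,
    Real.exp_log (hw _), ← Finset.mul_sum, hw1, mul_one, Real.log_exp, mul_div_cancel₀ _ hlam]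

variable [Nonempty A]

theorem sum_exp_div_pos (lam : ℝ) (x : A → ℝ) : 0 < ∑ a, exp (x a / lam) :=
  Finset.sum_pos (fun _ _ => Real.exp_pos _) Finset.univ_nonempty

theorem softmax_pos (lam : ℝ) (x : A → ℝ) (a : A) : 0 < softmax lam x a :=
  div_pos (Real.exp_pos _) (sum_exp_div_pos lam x)

theorem sum_softmax (lam : ℝ) (x : A → ℝ) : ∑ a, softmax lam x a = 1 := by
  simp only [softmax, ← Finset.sum_div]
  rw [div_self (sum_exp_div_pos lam x).ne']

theorem mul_log_softmax (hlam : lam ≠ 0) (x : A → ℝ) (a : A) :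
    lam * log (softmax lam x a) = x a - logSumExp lam x := by
  rw [softmax, Real.log_div (Real.exp_pos _).ne' (sum_exp_div_pos lam x).ne', Real.log_exp,
    logSumExp, mul_sub, mul_div_cancel₀ _ hlam]

theorem softmax_const_add_mul_log {w : A → ℝ} (hlam : lam ≠ 0) (hw : ∀ a, 0 < w a)
    (hw1 : ∑ a, w a = 1) (c : ℝ) : softmax lam (fun a => c + lam * log (w a)) = w := by
  funext a
  have h := mul_log_softmax hlam (fun a => c + lam * log (w a)) a
  rw [logSumExp_const_add_mul_log hlam hw hw1, add_sub_cancel_left] at h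
  rw [← Real.exp_log (softmax_pos lam _ a), ← Real.exp_log (hw a),
    mul_left_cancel₀ hlam h]

theorem logSumExp_le_add_of_le (hlam : 0 < lam) {x y : A → ℝ} {c : ℝ} (h : ∀ a, x a ≤ y a + c) :
    logSumExp lam x ≤ logSumExp lam y + c := by
  have hsum : ∑ a, exp (x a / lam) ≤ exp (c / lam) * ∑ a, exp (y a / lam) := by
    rw [Finset.mul_sum]
    refine Finset.sum_le_sum fun a _ => ?_
    rw [← Real.exp_add, Real.exp_le_exp, ← add_div]
    exact div_le_div_of_nonneg_right (by linarith [h a]) hlam.le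
  have hlog := Real.log_le_log (sum_exp_div_pos lam x) hsum
  rw [Real.log_mul (Real.exp_pos _).ne' (sum_exp_div_pos lam y).ne', Real.log_exp] at hlog
  have := mul_le_mul_of_nonneg_left hlog hlam.le
  rwa [mul_add, mul_div_cancel₀ _ hlam.ne', add_comm] at this

theorem mul_sub_log_le_sub {w q : ℝ} (hw : 0 ≤ w) (hq : 0 < q) : w * (log q - log w) ≤ q - w := by
  rcases hw.eq_or_lt with rfl | hw
  · simpa using hq.le
  have := Real.log_le_sub_one_of_pos (div_pos hq hw)
  rw [Real.log_div hq.ne' hw.ne'] at this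
  calc w * (log q - log w) ≤ w * (q / w - 1) := mul_le_mul_of_nonneg_left this hw.le
    _ = q - w := by field_simp

theorem sum_mul_sub_mul_log_le_logSumExp (hlam : 0 < lam) {w : A → ℝ} (hw0 : ∀ a, 0 ≤ w a)
    (hw1 : ∑ a, w a = 1) (x : A → ℝ) :
    ∑ a, w a * (x a - lam * log (w a)) ≤ logSumExp lam x := by
  have hterm : ∀ a, w a * (x a - lam * log (w a))
      ≤ lam * (softmax lam x a - w a) + w a * logSumExp lam x := fun a => by
    have hx : x a = lam * log (softmax lam x a) + logSumExp lam x := by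
      rw [mul_log_softmax hlam.ne']
      ring
    have := mul_le_mul_of_nonneg_left (mul_sub_log_le_sub (hw0 a) (softmax_pos lam x a)) hlam.le
    rw [hx]
    linarith
  calc ∑ a, w a * (x a - lam * log (w a))
      ≤ ∑ a, (lam * (softmax lam x a - w a) + w a * logSumExp lam x) :=
        Finset.sum_le_sum fun a _ => hterm a
    _ = logSumExp lam x := by
        rw [Finset.sum_add_distrib, ← Finset.mul_sum, Finset.sum_sub_distrib, sum_softmax, hw1,
          ← Finset.sum_mul, hw1]
        ring

theorem sum_softmax_mul_sub_mul_log (hlam : lam ≠ 0) (x : A → ℝ) :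
    ∑ a, softmax lam x a * (x a - lam * log (softmax lam x a)) = logSumExp lam x := by
  simp only [mul_log_softmax hlam, sub_sub_cancel, ← Finset.sum_mul, sum_softmax, one_mul]

end LogSumExp

theorem IsPolicy.le_one {S A : Type} [Fintype A] {π : S → A → ℝ} (hπ : IsPolicy π) (s : S)
    (a : A) : π s a ≤ 1 :=
  hπ.2 s ▸ Finset.single_le_sum (fun a' _ => hπ.1 s a') (Finset.mem_univ a)

theorem isPolicy_softmax {S A : Type} [Fintype A] [Nonempty A] (lam : ℝ) (x : S → A → ℝ) :
    IsPolicy fun s => softmax lam (x s) :=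
  ⟨fun s a => (softmax_pos lam (x s) a).le, fun s => sum_softmax lam (x s)⟩

noncomputable def entropyReward {S A : Type} [Fintype A] (lam : ℝ) (π : S → A → ℝ)
    (r : S × A → ℝ) (s : S) : ℝ :=
  ∑ a, π s a * (r (s, a) - lam * log (π s a))

namespace MDP

variable {S A : Type} [Fintype S] [Fintype A] (M : MDP S A) {lam : ℝ}

noncomputable def qValue (r : S × A → ℝ) (V : S → ℝ) (s : S) (a : A) : ℝ :=
  r (s, a) + M.disc * ∑ s', M.p s a s' * V s'

noncomputable def softBellman (lam : ℝ) (r : S × A → ℝ) (V : S → ℝ) (s : S) : ℝ :=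
  logSumExp lam (M.qValue r V s)

theorem pmat_mem_rowStochastic [DecidableEq S] {π : S → A → ℝ} (hπ : IsPolicy π) :
    Pmat M π ∈ Matrix.rowStochastic ℝ S := by
  refine Matrix.mem_rowStochastic_iff_sum.2
    ⟨fun s s' => Finset.sum_nonneg fun a _ => mul_nonneg (hπ.1 s a) (M.p_nonneg s a s'),
      fun s => ?_⟩
  simp only [Pmat, Matrix.of_apply]
  rw [Finset.sum_comm]
  simp only [← Finset.mul_sum, M.p_sum_one, mul_one, hπ.2 s]

theorem vpiSoft_eq_tsum [DecidableEq S] {π : S → A → ℝ} (hπ : IsPolicy π) (r : S × A → ℝ) :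
    VpiSoft M lam π r = ∑' t : ℕ, M.disc ^ t • (Pmat M π ^ t *ᵥ entropyReward lam π r) := by
  funext s
  rw [tsum_apply (Matrix.summable_pow_smul_pow_mulVec M.disc_nonneg M.disc_lt_one
    (M.pmat_mem_rowStochastic hπ) _)]
  rfl

theorem entropyReward_add_disc_mulVec (π : S → A → ℝ) (r : S × A → ℝ) (V : S → ℝ) (s : S) :
    entropyReward lam π r s + M.disc * (Pmat M π *ᵥ V) s
      = ∑ a, π s a * (M.qValue r V s a - lam * log (π s a)) := by
  have hP : M.disc * (Pmat M π *ᵥ V) s = ∑ a, π s a * (M.disc * ∑ s', M.p s a s' * V s') := by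
    simp only [Matrix.mulVec, dotProduct, Pmat, Matrix.of_apply, Finset.sum_mul, Finset.mul_sum]
    rw [Finset.sum_comm]
    exact Finset.sum_congr rfl fun _ _ => Finset.sum_congr rfl fun _ _ => by ring
  rw [hP, entropyReward, ← Finset.sum_add_distrib]
  exact Finset.sum_congr rfl fun a _ => by rw [qValue]; ring

theorem vpiSoft_le_of_isFixedPt [DecidableEq S] [Nonempty A] (hlam : 0 < lam) {r : S × A → ℝ}
    {V : S → ℝ} (hV : IsFixedPt (M.softBellman lam r) V) {π : S → A → ℝ} (hπ : IsPolicy π) :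
    VpiSoft M lam π r ≤ V := by
  rw [M.vpiSoft_eq_tsum hπ]
  refine Matrix.tsum_pow_smul_pow_mulVec_le M.disc_nonneg M.disc_lt_one
    (M.pmat_mem_rowStochastic hπ) fun s => ?_
  have hgibbs := sum_mul_sub_mul_log_le_logSumExp hlam (hπ.1 s) (hπ.2 s) (M.qValue r V s)
  have hsplit := M.entropyReward_add_disc_mulVec (lam := lam) π r V s
  have hfix : M.softBellman lam r V s = V s := congrFun hV s
  rw [softBellman] at hfix
  simp only [Pi.sub_apply, Pi.smul_apply, smul_eq_mul]
  linarith

theorem vpiSoft_softmax_of_isFixedPt [DecidableEq S] [Nonempty A] (hlam : 0 < lam)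
    {r : S × A → ℝ} {V : S → ℝ} (hV : IsFixedPt (M.softBellman lam r) V) :
    VpiSoft M lam (fun s => softmax lam (M.qValue r V s)) r = V := by
  set π := fun s => softmax lam (M.qValue r V s)
  have hπ : IsPolicy π := isPolicy_softmax lam _
  have hreward : entropyReward lam π r = V - M.disc • Pmat M π *ᵥ V := funext fun s => by
    have hgibbs := sum_softmax_mul_sub_mul_log hlam.ne' (M.qValue r V s)
    have hsplit := M.entropyReward_add_disc_mulVec (lam := lam) π r V s
    have hfix : M.softBellman lam r V s = V s := congrFun hV s
    rw [softBellman] at hfix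
    simp only [Pi.sub_apply, Pi.smul_apply, smul_eq_mul]
    linarith
  rw [M.vpiSoft_eq_tsum hπ, hreward]
  exact (Matrix.hasSum_pow_smul_pow_mulVec_sub M.disc_nonneg M.disc_lt_one
    (M.pmat_mem_rowStochastic hπ) V).tsum_eq

theorem vstarSoft_eq_of_isFixedPt [DecidableEq S] [Nonempty A] (hlam : 0 < lam)
    {r : S × A → ℝ} {V : S → ℝ} (hV : IsFixedPt (M.softBellman lam r) V) :
    VstarSoft M lam r = V := by
  funext s
  let πV : {π : S → A → ℝ // IsPolicy π} := ⟨_, isPolicy_softmax lam (M.qValue r V)⟩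
  have hπV : VpiSoft M lam πV.1 r = V := M.vpiSoft_softmax_of_isFixedPt hlam hV
  have hle : ∀ π : {π : S → A → ℝ // IsPolicy π}, VpiSoft M lam π.1 r s ≤ V s :=
    fun π => M.vpiSoft_le_of_isFixedPt hlam hV π.2 s
  have : Nonempty {π : S → A → ℝ // IsPolicy π} := ⟨πV⟩
  refine le_antisymm (ciSup_le hle) ?_
  calc V s = VpiSoft M lam πV.1 r s := by rw [hπV]
    _ ≤ VstarSoft M lam r s := le_ciSup ⟨V s, Set.forall_mem_range.2 hle⟩ πV

theorem softBellman_contractingWith [Nonempty A] (hlam : 0 < lam) (r : S × A → ℝ) :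
    ContractingWith ⟨M.disc, M.disc_nonneg⟩ (M.softBellman lam r) := by
  refine ⟨M.disc_lt_one, LipschitzWith.of_dist_le_mul fun V W => ?_⟩
  refine (dist_pi_le_iff (mul_nonneg M.disc_nonneg dist_nonneg)).2 fun s => ?_
  have hq : ∀ a, |M.qValue r V s a - M.qValue r W s a| ≤ M.disc * dist V W := fun a => by
    have : M.qValue r V s a - M.qValue r W s a = M.disc * ∑ s', M.p s a s' * (V - W) s' := by
      simp only [qValue, Pi.sub_apply, mul_sub, Finset.sum_sub_distrib]
      ring
    rw [this, abs_mul, abs_of_nonneg M.disc_nonneg, dist_eq_norm]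
    exact mul_le_mul_of_nonneg_left (abs_sum_mul_le_norm (M.p_nonneg s a) (M.p_sum_one s a) _)
      M.disc_nonneg
  have hVW := logSumExp_le_add_of_le (x := M.qValue r V s) (y := M.qValue r W s)
    (c := M.disc * dist V W) hlam fun a => by linarith [(abs_le.1 (hq a)).2]
  have hWV := logSumExp_le_add_of_le (x := M.qValue r W s) (y := M.qValue r V s)
    (c := M.disc * dist V W) hlam fun a => by linarith [(abs_le.1 (hq a)).1]
  rw [Real.dist_eq, abs_le]
  constructor <;> simp only [softBellman] <;> linarith

theorem isFixedPt_vstarSoft [DecidableEq S] [Nonempty A] (hlam : 0 < lam) (r : S × A → ℝ) :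
    IsFixedPt (M.softBellman lam r) (VstarSoft M lam r) := by
  have hfix := (M.softBellman_contractingWith hlam r).fixedPoint_isFixedPt
  rwa [M.vstarSoft_eq_of_isFixedPt hlam hfix]

noncomputable def mceReward (lam : ℝ) (π : S → A → ℝ) (V : S → ℝ) (sa : S × A) : ℝ :=
  V sa.1 + lam * log (π sa.1 sa.2) - M.disc * ∑ s', M.p sa.1 sa.2 s' * V s'

theorem qValue_mceReward (π : S → A → ℝ) (V : S → ℝ) (s : S) (a : A) :
    M.qValue (M.mceReward lam π V) V s a = V s + lam * log (π s a) := by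
  simp only [qValue, mceReward]
  ring

theorem qstarSoft_eq_qValue [DecidableEq S] (r : S × A → ℝ) :
    QstarSoft M lam r = M.qValue r (VstarSoft M lam r) :=
  rfl

theorem image_mceReward_eq_image_add (π π' : S → A → ℝ) (X : Set (S → ℝ)) :
    M.mceReward lam π' '' X = (· + fun sa => lam * (log (π' sa.1 sa.2) - log (π sa.1 sa.2))) ''
      (M.mceReward lam π '' X) := by
  rw [Set.image_image]
  refine Set.image_congr fun V _ => funext fun sa => ?_
  simp only [mceReward, Pi.add_apply]
  ring

variable [DecidableEq S] [Nonempty A] {π : S → A → ℝ}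

theorem vstarSoft_mceReward (hlam : 0 < lam) (hπ : IsPolicy π) (hπpos : ∀ s a, 0 < π s a)
    (V : S → ℝ) : VstarSoft M lam (M.mceReward lam π V) = V :=
  M.vstarSoft_eq_of_isFixedPt hlam <| funext fun s => by
    rw [softBellman, show M.qValue (M.mceReward lam π V) V s = _ from
      funext (M.qValue_mceReward π V s)]
    exact logSumExp_const_add_mul_log hlam.ne' (hπpos s) (hπ.2 s) (V s)

theorem qstarSoft_mceReward (hlam : 0 < lam) (hπ : IsPolicy π) (hπpos : ∀ s a, 0 < π s a)
    (V : S → ℝ) (s : S) (a : A) :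
    QstarSoft M lam (M.mceReward lam π V) s a = V s + lam * log (π s a) := by
  rw [qstarSoft_eq_qValue, M.vstarSoft_mceReward hlam hπ hπpos, qValue_mceReward]

theorem astarSoft_mceReward (hlam : 0 < lam) (hπ : IsPolicy π) (hπpos : ∀ s a, 0 < π s a)
    (V : S → ℝ) (s : S) (a : A) :
    AstarSoft M lam (M.mceReward lam π V) s a = lam * log (π s a) := by
  rw [AstarSoft, M.qstarSoft_mceReward hlam hπ hπpos, M.vstarSoft_mceReward hlam hπ hπpos,
    add_sub_cancel_left]

theorem rmce_eq_range_mceReward (hlam : 0 < lam) (hπ : IsPolicy π) (hπpos : ∀ s a, 0 < π s a) :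
    RMCE M lam π = Set.range (M.mceReward lam π) := by
  ext r
  constructor
  · intro hr
    refine ⟨VstarSoft M lam r, funext fun ⟨s, a⟩ => ?_⟩
    have hsoftmax : π s = softmax lam (QstarSoft M lam r s) := funext (hr s)
    have hlog := mul_log_softmax hlam.ne' (QstarSoft M lam r s) a
    rw [← hsoftmax, qstarSoft_eq_qValue, ← softBellman, M.isFixedPt_vstarSoft hlam r] at hlog
    simp only [mceReward, hlog, qValue]
    ring
  · rintro ⟨V, rfl⟩ s a
    show π s a = softmax lam (QstarSoft M lam (M.mceReward lam π V) s) a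
    rw [show QstarSoft M lam (M.mceReward lam π V) s = _ from
      funext (M.qstarSoft_mceReward hlam hπ hπpos V s),
      softmax_const_add_mul_log hlam.ne' (hπpos s) (hπ.2 s)]

theorem srmce_inter_rmce_eq_image_mceReward (hlam : 0 < lam) (hπ : IsPolicy π)
    (hπpos : ∀ s a, 0 < π s a) {C1 C2 : ℝ} (hC2 : ∀ s a, |lam * log (π s a)| ≤ C2) :
    SRMCE M lam C1 C2 ∩ RMCE M lam π = M.mceReward lam π '' {V | ∀ s (_ : A), |V s| ≤ C1} := by
  rw [M.rmce_eq_range_mceReward hlam hπ hπpos]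
  ext r
  simp only [SRMCE, Set.mem_inter_iff, Set.mem_ofPred_eq, Set.mem_range, Set.mem_image]
  constructor
  · rintro ⟨hr, V, rfl⟩
    refine ⟨V, fun s a => ?_, rfl⟩
    simpa only [M.vstarSoft_mceReward hlam hπ hπpos] using (hr s a).1
  · rintro ⟨V, hV, rfl⟩
    refine ⟨fun s a => ?_, V, rfl⟩
    rw [M.vstarSoft_mceReward hlam hπ hπpos, M.astarSoft_mceReward hlam hπ hπpos]
    exact ⟨hV s a, hC2 s a⟩

end MDP

theorem abs_mul_log_le_mul_log_one_div {lam x xmin : ℝ} (hlam : 0 ≤ lam) (hxmin : 0 < xmin)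
    (hx : xmin ≤ x) (hx1 : x ≤ 1) : |lam * log x| ≤ lam * log (1 / xmin) := by
  rw [abs_mul, abs_of_nonneg hlam, abs_of_nonpos (Real.log_nonpos (hxmin.trans_le hx).le hx1),
    one_div, Real.log_inv]
  exact mul_le_mul_of_nonneg_left (neg_le_neg (Real.log_le_log hxmin hx)) hlam

theorem hausdorffMeasure_preimage_ofLp_image_add_const {ι : Type*} [Fintype ι] (d : ℝ)
    (c : ι → ℝ) (X : Set (ι → ℝ)) :
    μH[d] (WithLp.ofLp ⁻¹' ((· + c) '' X) : Set (EuclideanSpace ℝ ι))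
      = μH[d] (WithLp.ofLp ⁻¹' X : Set (EuclideanSpace ℝ ι)) := by
  rw [Set.image_add_right,
    ← (IsometryEquiv.addRight (WithLp.toLp 2 (-c))).hausdorffMeasure_preimage d
      (WithLp.ofLp ⁻¹' X)]
  rfl

theorem statement4_general {S A : Type} [Fintype S] [Fintype A] [DecidableEq S]
    (lam C1 C2 : ℝ) (hlam : 0 < lam)
    (M : MDP S A) (π1 π2 : S → A → ℝ) (hp1 : IsPolicy π1) (hp2 : IsPolicy π2)
    (πmin : ℝ) (hπmin : 0 < πmin)
    (hlb1 : ∀ s a, πmin ≤ π1 s a) (hlb2 : ∀ s a, πmin ≤ π2 s a)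
    (hC2' : lam * Real.log (1 / πmin) ≤ C2) :
    μH[(Fintype.card S : ℝ)] (show Set (EuclideanSpace ℝ (S × A)) from
        WithLp.ofLp ⁻¹' (SRMCE M lam C1 C2 ∩ RMCE M lam π1)) =
      μH[(Fintype.card S : ℝ)] (show Set (EuclideanSpace ℝ (S × A)) from
        WithLp.ofLp ⁻¹' (SRMCE M lam C1 C2 ∩ RMCE M lam π2)) := by
  rcases isEmpty_or_nonempty A with hA | hA
  · have huniv : ∀ π : S → A → ℝ, SRMCE M lam C1 C2 ∩ RMCE M lam π = Set.univ := fun π => by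
      ext r
      simp [SRMCE, RMCE]
    rw [huniv, huniv]
  have hpos : ∀ π : S → A → ℝ, (∀ s a, πmin ≤ π s a) → ∀ s a, 0 < π s a :=
    fun π hlb s a => hπmin.trans_le (hlb s a)
  have hC2 : ∀ π : S → A → ℝ, IsPolicy π → (∀ s a, πmin ≤ π s a) →
      ∀ s a, |lam * log (π s a)| ≤ C2 :=
    fun π hπ hlb s a =>
      (abs_mul_log_le_mul_log_one_div hlam.le hπmin (hlb s a) (hπ.le_one s a)).trans hC2'
  rw [M.srmce_inter_rmce_eq_image_mceReward hlam hp1 (hpos π1 hlb1) (hC2 π1 hp1 hlb1),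
    M.srmce_inter_rmce_eq_image_mceReward hlam hp2 (hpos π2 hlb2) (hC2 π2 hp2 hlb2),
    M.image_mceReward_eq_image_add π1 π2]
  exact (hausdorffMeasure_preimage_ofLp_image_add_const _ _ _).symm

/-- the `|S|`-dimensional Hausdorff measure of `𝒮R^{MCE}_M ∩ R^{MCE,S}_{M,π}`
does not depend on the policy `π` (among policies bounded below by `π_min`). -/
theorem statement4 {S A : Type} [Fintype S] [Fintype A] [DecidableEq S] [DecidableEq A]
    (lam C1 C2 : ℝ) (hlam : 0 < lam) (hC1 : 0 < C1) (hC2 : 0 < C2)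
    (M : MDP S A) (π1 π2 : S → A → ℝ) (hp1 : IsPolicy π1) (hp2 : IsPolicy π2)
    (πmin : ℝ) (hπmin : 0 < πmin)
    (hlb1 : ∀ s a, πmin ≤ π1 s a) (hlb2 : ∀ s a, πmin ≤ π2 s a)
    (hC2' : lam * Real.log (1 / πmin) ≤ C2) :
    μH[(Fintype.card S : ℝ)] (show Set (EuclideanSpace ℝ (S × A)) from
        WithLp.ofLp ⁻¹' (SRMCE M lam C1 C2 ∩ RMCE M lam π1)) =
      μH[(Fintype.card S : ℝ)] (show Set (EuclideanSpace ℝ (S × A)) from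
        WithLp.ofLp ⁻¹' (SRMCE M lam C1 C2 ∩ RMCE M lam π2)) :=
  statement4_general lam C1 C2 hlam M π1 π2 hp1 hp2 πmin hπmin hlb1 hlb2 hC2'
end
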